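/- Let W and Y be real symmetric n×n matrices with W positive definite, and let φ_{WY}(x) = (πħ)^{−n/4} (det W)^{1/4} exp(−⟨(W+iY)x, x⟩/(2ħ)) be the corresponding Gaussian on ℝⁿ. Then its Wigner transform Wφ_{WY}(x,p) := (2πħ)^{−n} ∫_{ℝⁿ} e^{−i⟨p,y⟩/ħ} φ_{WY}(x + y/2) \overline{φ_{WY}(x − y/2)} dy equals (πħ)^{−n} exp(−⟨Gz, z⟩/ħ), where z = (x,p) and G is the block matrix G = [[W + Y W⁻¹ Y, Y W⁻¹],[W⁻¹ Y, W⁻¹]]. -/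

import Mathlib

/-!
The W-parts of the two exponents of `φ_{WY}(x + y/2) · conj φ_{WY}(x - y/2)` add up by the
parallelogram law and the Y-parts cancel up to a cross term by polarization, leaving
`exp(-⟨Wx,x⟩/ħ)` times the Gaussian `exp(-⟨Wy,y⟩/(4ħ) - i⟨Yx + p, y⟩/ħ)` in `y`. The
substitution `y = W^{-1/2} u` reduces its integral to the standard Gaussian Fourier integral,
which contributes `exp(-⟨W⁻¹(Yx + p), Yx + p⟩/ħ)`; expanding the block matrix shows that
`⟨Gz, z⟩ = ⟨Wx, x⟩ + ⟨W⁻¹(Yx + p), Yx + p⟩`.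
-/

open Matrix MeasureTheory

/-- The Gaussian wavefunction
`φ_{WY}(x) = (πħ)^{−n/4} (det W)^{1/4} exp(−⟨(W+iY)x, x⟩/(2ħ))` on `ℝⁿ`. -/
noncomputable def gaussianWY (n : ℕ) (hbar : ℝ) (W Y : Matrix (Fin n) (Fin n) ℝ)
    (x : Fin n → ℝ) : ℂ :=
  (((Real.pi * hbar) ^ (-(n : ℝ) / 4) * W.det ^ ((1 : ℝ) / 4) : ℝ) : ℂ) *
    Complex.exp (-(((W.map Complex.ofReal + Complex.I • Y.map Complex.ofReal).mulVec
        (fun i => (x i : ℂ))) ⬝ᵥ (fun i => (x i : ℂ))) / (2 * (hbar : ℂ)))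

open Complex
open scoped Real

theorem integral_cexp_neg_mul_dotProduct_self_sub {ι : Type*} [Fintype ι] {t : ℝ} (ht : 0 < t)
    (w : ι → ℝ) :
    ∫ u : ι → ℝ, cexp (-(t * ↑(u ⬝ᵥ u)) - I * ↑(w ⬝ᵥ u))
      = ((π / t) ^ (Fintype.card ι / 2 : ℝ) : ℝ) * cexp (-↑(w ⬝ᵥ w) / (4 * t)) := by
  have key := GaussianFourier.integral_cexp_neg_mul_sum_add (b := (t : ℂ)) (by simpa using ht)
    (fun i => -I * w i)
  have hsq : ∑ i, (-I * w i) ^ 2 = -↑(w ⬝ᵥ w) := by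
    rw [dotProduct, ofReal_sum, ← Finset.sum_neg_distrib]
    refine Finset.sum_congr rfl fun i _ => ?_
    rw [mul_pow, neg_sq, I_sq]
    push_cast
    ring
  rw [hsq, ← ofReal_div, ← ofReal_natCast, ← ofReal_ofNat, ← ofReal_div,
    ← ofReal_cpow (by positivity)] at key
  convert key using 3 with u
  simp only [dotProduct, ofReal_sum, ofReal_mul, Finset.mul_sum, neg_mul,
    ← Finset.sum_neg_distrib, sub_eq_add_neg, sq]
  ring_nf

theorem Matrix.integral_comp_mulVec {ι E : Type*} [Fintype ι] [DecidableEq ι]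
    [NormedAddCommGroup E] [NormedSpace ℝ E] {M : Matrix ι ι ℝ} (hM : M.det ≠ 0)
    (f : (ι → ℝ) → E) :
    ∫ u, f (M *ᵥ u) = |M.det|⁻¹ • ∫ y, f y := by
  have hinj : Function.Injective (toLin' M) :=
    mulVec_injective_iff_isUnit.mpr ((isUnit_iff_isUnit_det M).mpr hM.isUnit)
  have hemb : MeasurableEmbedding (toLin' M) :=
    ((toLin' M).isClosedEmbedding_of_injective
      (LinearMap.ker_eq_bot.mpr hinj)).measurableEmbedding
  rw [← abs_inv, ← ENNReal.toReal_ofReal (abs_nonneg _), ← integral_smul_measure,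
    ← Real.map_matrix_volume_pi_eq_smul_volume_pi hM, hemb.integral_map]
  rfl

theorem Matrix.mulVec_mulVec_dotProduct_mulVec {ι R : Type*} [Fintype ι] [CommSemiring R]
    (A M : Matrix ι ι R) (u : ι → R) :
    A *ᵥ (M *ᵥ u) ⬝ᵥ M *ᵥ u = (Mᵀ * A * M) *ᵥ u ⬝ᵥ u := by
  rw [mulVec_mulVec, dotProduct_mulVec, ← mulVec_transpose, mulVec_mulVec, Matrix.mul_assoc]

open scoped MatrixOrder in
theorem Matrix.PosDef.integral_cexp_neg_mul_quadForm_sub {ι : Type*} [Fintype ι]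
    [DecidableEq ι] {A : Matrix ι ι ℝ} (hA : A.PosDef) {t : ℝ} (ht : 0 < t) (b : ι → ℝ) :
    ∫ y : ι → ℝ, cexp (-(t * ↑(A *ᵥ y ⬝ᵥ y)) - I * ↑(b ⬝ᵥ y))
      = ((π / t) ^ (Fintype.card ι / 2 : ℝ) / √A.det : ℝ) *
          cexp (-↑(A⁻¹ *ᵥ b ⬝ᵥ b) / (4 * t)) := by
  set S := CFC.sqrt A
  have hSS : S * S = A := CFC.sqrt_mul_sqrt_self A hA.posSemidef.nonneg
  have hS : S.IsSymm := isHermitian_iff_isSymm.mp (CFC.sqrt_nonneg A).posSemidef.isHermitian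
  have hsqrt_pos : 0 < √A.det := Real.sqrt_pos.mpr hA.det_pos
  have hdetS : S.det = √A.det := by
    rw [hA.posSemidef.det_sqrt, RCLike.sqrt_of_nonneg hA.posSemidef.det_nonneg]
    rfl
  have hS_unit : IsUnit S.det := hdetS ▸ hsqrt_pos.ne'.isUnit
  have hquad (u : ι → ℝ) : A *ᵥ (S⁻¹ *ᵥ u) ⬝ᵥ S⁻¹ *ᵥ u = u ⬝ᵥ u := by
    rw [mulVec_mulVec_dotProduct_mulVec, hS.inv.eq, ← hSS, ← Matrix.mul_assoc,
      nonsing_inv_mul _ hS_unit, Matrix.one_mul, mul_nonsing_inv _ hS_unit, one_mulVec]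
  have hlin (u : ι → ℝ) : b ⬝ᵥ S⁻¹ *ᵥ u = S⁻¹ *ᵥ b ⬝ᵥ u := by
    rw [dotProduct_mulVec, ← mulVec_transpose, hS.inv.eq]
  have hnorm : S⁻¹ *ᵥ b ⬝ᵥ S⁻¹ *ᵥ b = A⁻¹ *ᵥ b ⬝ᵥ b := by
    rw [dotProduct_mulVec, ← mulVec_transpose, hS.inv.eq, mulVec_mulVec, ← Matrix.mul_inv_rev,
      hSS]
  have hchange := integral_comp_mulVec (isUnit_nonsing_inv_det S hS_unit).ne_zero
    (fun y : ι → ℝ => cexp (-(t * ↑(A *ᵥ y ⬝ᵥ y)) - I * ↑(b ⬝ᵥ y)))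
  simp only [hquad, hlin, integral_cexp_neg_mul_dotProduct_self_sub ht, hnorm, det_nonsing_inv,
    Ring.inverse_eq_inv, abs_inv, inv_inv, hdetS, abs_of_pos hsqrt_pos, real_smul] at hchange
  rw [ofReal_div, div_mul_eq_mul_div, hchange,
    mul_div_cancel_left₀ _ (ofReal_ne_zero.mpr hsqrt_pos.ne')]

theorem Matrix.parallelogram_law_mulVec_dotProduct {ι R : Type*} [Fintype ι] [CommRing R]
    (A : Matrix ι ι R) (u v : ι → R) :
    A *ᵥ (u + v) ⬝ᵥ (u + v) + A *ᵥ (u - v) ⬝ᵥ (u - v) = 2 * (A *ᵥ u ⬝ᵥ u + A *ᵥ v ⬝ᵥ v) := by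
  simp only [mulVec_add, mulVec_sub, add_dotProduct, sub_dotProduct, dotProduct_add,
    dotProduct_sub]
  ring

theorem Matrix.IsSymm.polarization_mulVec_dotProduct {ι R : Type*} [Fintype ι] [CommRing R]
    {A : Matrix ι ι R} (hA : A.IsSymm) (u v : ι → R) :
    A *ᵥ (u + v) ⬝ᵥ (u + v) - A *ᵥ (u - v) ⬝ᵥ (u - v) = 4 * (A *ᵥ u ⬝ᵥ v) := by
  have hswap : A *ᵥ v ⬝ᵥ u = A *ᵥ u ⬝ᵥ v := by
    rw [dotProduct_comm, dotProduct_mulVec, ← mulVec_transpose, hA.eq]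
  simp only [mulVec_add, mulVec_sub, add_dotProduct, sub_dotProduct, dotProduct_add,
    dotProduct_sub, hswap]
  ring

theorem Matrix.IsSymm.fromBlocks_mulVec_sumElim_dotProduct {m R : Type*} [Fintype m]
    [CommSemiring R] {Y : Matrix m m R} (hY : Y.IsSymm) (A B : Matrix m m R) (x p : m → R) :
    Matrix.fromBlocks (A + Y * B * Y) (Y * B) (B * Y) B *ᵥ Sum.elim x p ⬝ᵥ Sum.elim x p
      = A *ᵥ x ⬝ᵥ x + B *ᵥ (Y *ᵥ x + p) ⬝ᵥ (Y *ᵥ x + p) := by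
  have hswap (v : m → R) : Y *ᵥ v ⬝ᵥ x = Y *ᵥ x ⬝ᵥ v := by
    rw [dotProduct_comm, dotProduct_mulVec, ← mulVec_transpose, hY.eq]
  rw [fromBlocks_mulVec, sumElim_dotProduct_sumElim]
  simp only [Sum.elim_comp_inl, Sum.elim_comp_inr, add_mulVec, ← mulVec_mulVec, mulVec_add,
    add_dotProduct, dotProduct_add, hswap]
  rw [dotProduct_comm (Y *ᵥ x) (B *ᵥ Y *ᵥ x), dotProduct_comm (Y *ᵥ x) (B *ᵥ p)]
  ring

theorem Matrix.map_ofReal_add_I_smul_mulVec_dotProduct {ι : Type*} [Fintype ι]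
    (A B : Matrix ι ι ℝ) (v : ι → ℝ) :
    (A.map ofReal + I • B.map ofReal) *ᵥ (fun i => (v i : ℂ)) ⬝ᵥ (fun i => (v i : ℂ))
      = ↑(A *ᵥ v ⬝ᵥ v) + I * ↑(B *ᵥ v ⬝ᵥ v) := by
  simp only [add_mulVec, smul_mulVec, add_dotProduct, smul_dotProduct, smul_eq_mul]
  congr 2 <;> simp [dotProduct, mulVec]

theorem gaussianWY_apply (n : ℕ) (hbar : ℝ) (W Y : Matrix (Fin n) (Fin n) ℝ) (x : Fin n → ℝ) :
    gaussianWY n hbar W Y x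
      = ((π * hbar) ^ (-(n : ℝ) / 4) * W.det ^ ((1 : ℝ) / 4) : ℝ) *
          cexp (-(↑(W *ᵥ x ⬝ᵥ x) + I * ↑(Y *ᵥ x ⬝ᵥ x)) / (2 * hbar)) := by
  rw [gaussianWY, map_ofReal_add_I_smul_mulVec_dotProduct]

theorem conj_gaussianWY (n : ℕ) (hbar : ℝ) (W Y : Matrix (Fin n) (Fin n) ℝ) (x : Fin n → ℝ) :
    starRingEnd ℂ (gaussianWY n hbar W Y x)
      = ((π * hbar) ^ (-(n : ℝ) / 4) * W.det ^ ((1 : ℝ) / 4) : ℝ) *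
          cexp (-(↑(W *ᵥ x ⬝ᵥ x) - I * ↑(Y *ᵥ x ⬝ᵥ x)) / (2 * hbar)) := by
  rw [gaussianWY_apply, map_mul, conj_ofReal, ← Complex.exp_conj]
  congr 2
  simp [sub_eq_add_neg, map_ofNat]

theorem cexp_mul_gaussianWY_add_mul_conj_gaussianWY_sub (n : ℕ) (hbar : ℝ)
    (W : Matrix (Fin n) (Fin n) ℝ) {Y : Matrix (Fin n) (Fin n) ℝ} (hY : Y.IsSymm)
    (x p y : Fin n → ℝ) :
    cexp (-(I * ↑(p ⬝ᵥ y)) / hbar) * gaussianWY n hbar W Y (x + y / 2) *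
        starRingEnd ℂ (gaussianWY n hbar W Y (x - y / 2))
      = ↑(((π * hbar) ^ (-(n : ℝ) / 4) * W.det ^ ((1 : ℝ) / 4)) ^ 2) *
          cexp (-↑(W *ᵥ x ⬝ᵥ x) / hbar) *
          cexp (-(↑(4 * hbar)⁻¹ * ↑(W *ᵥ y ⬝ᵥ y)) - I * ↑(hbar⁻¹ • (Y *ᵥ x + p) ⬝ᵥ y)) := by
  have hhalf : y / 2 = (2 : ℝ)⁻¹ • y := by
    ext i
    simp [div_eq_inv_mul]
  have hW := parallelogram_law_mulVec_dotProduct W x ((2 : ℝ)⁻¹ • y)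
  have hY := hY.polarization_mulVec_dotProduct x ((2 : ℝ)⁻¹ • y)
  simp only [mulVec_smul, smul_dotProduct, dotProduct_smul, smul_eq_mul] at hW hY
  rw [gaussianWY_apply, conj_gaussianWY, hhalf, eq_sub_of_add_eq' hW, sub_eq_iff_eq_add'.mp hY]
  rw [show ∀ c z₁ z₂ z₃ : ℂ, cexp z₁ * (c * cexp z₂) * (c * cexp z₃) = c ^ 2 * cexp (z₁ + z₂ + z₃)
    from fun c z₁ z₂ z₃ => by rw [exp_add, exp_add]; ring, mul_assoc, ← exp_add, ofReal_pow]
  congr 2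
  simp only [smul_dotProduct, add_dotProduct, smul_eq_mul]
  push_cast
  ring

theorem wigner_gaussianWY_normalization {hbar d : ℝ} (hhbar : 0 < hbar) (hd : 0 < d) (s : ℝ) :
    (2 * π * hbar) ^ (-s) * ((π * hbar) ^ (-s / 4) * d ^ ((1 : ℝ) / 4)) ^ 2 *
        ((π / (4 * hbar)⁻¹) ^ (s / 2) / √d)
      = (π * hbar) ^ (-s) := by
  have ha : 0 < π * hbar := by positivity
  have hlog2 : Real.log (2 * (π * hbar)) = Real.log 2 + Real.log (π * hbar) :=
    Real.log_mul two_ne_zero ha.ne'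
  have hlog4 : Real.log (4 * (π * hbar)) = 2 * Real.log 2 + Real.log (π * hbar) := by
    rw [Real.log_mul four_ne_zero ha.ne', show (4 : ℝ) = 2 ^ 2 by norm_num, Real.log_pow]
    push_cast
    ring
  rw [show π / (4 * hbar)⁻¹ = 4 * (π * hbar) by field_simp, mul_assoc 2 π, Real.sqrt_eq_rpow]
  simp only [Real.rpow_def_of_pos ha, Real.rpow_def_of_pos hd,
    Real.rpow_def_of_pos (by positivity : 0 < 2 * (π * hbar)),
    Real.rpow_def_of_pos (by positivity : 0 < 4 * (π * hbar)), ← Real.exp_add, ← Real.exp_sub,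
    ← Real.exp_nat_mul, hlog2, hlog4]
  congr 1
  push_cast
  ring

/-- the Wigner transform
`Wφ_{WY}(x,p) = (2πħ)^{−n} ∫ e^{−i⟨p,y⟩/ħ} φ_{WY}(x+y/2) conj(φ_{WY}(x−y/2)) dy`
of the Gaussian `φ_{WY}` equals `(πħ)^{−n} exp(−⟨Gz,z⟩/ħ)` with `z = (x,p)` and
`G = [[W + Y W⁻¹ Y, Y W⁻¹],[W⁻¹ Y, W⁻¹]]`. -/
theorem statement11 (n : ℕ) (hbar : ℝ) (hhbar : 0 < hbar)
    (W Y : Matrix (Fin n) (Fin n) ℝ) (hW : W.PosDef) (hY : Y.IsSymm)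
    (x p : Fin n → ℝ) :
    (((2 * Real.pi * hbar) ^ (-(n : ℝ)) : ℝ) : ℂ) *
        ∫ y : Fin n → ℝ,
          Complex.exp (-(Complex.I * ((p ⬝ᵥ y : ℝ) : ℂ)) / (hbar : ℂ)) *
            gaussianWY n hbar W Y (x + y / 2) *
            (starRingEnd ℂ) (gaussianWY n hbar W Y (x - y / 2))
      = (((Real.pi * hbar) ^ (-(n : ℝ)) : ℝ) : ℂ) *
          Complex.exp (-((((Matrix.fromBlocks (W + Y * W⁻¹ * Y) (Y * W⁻¹) (W⁻¹ * Y)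
                W⁻¹).mulVec (Sum.elim x p) ⬝ᵥ Sum.elim x p : ℝ)) : ℂ) / (hbar : ℂ)) := by
  have hexp : cexp (-↑(W *ᵥ x ⬝ᵥ x + W⁻¹ *ᵥ (Y *ᵥ x + p) ⬝ᵥ (Y *ᵥ x + p)) / hbar)
      = cexp (-↑(W *ᵥ x ⬝ᵥ x) / hbar) * cexp (-↑(W⁻¹ *ᵥ (hbar⁻¹ • (Y *ᵥ x + p)) ⬝ᵥ
          hbar⁻¹ • (Y *ᵥ x + p)) / (4 * ↑(4 * hbar)⁻¹)) := by
    rw [← exp_add]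
    congr 1
    simp only [mulVec_smul, smul_dotProduct, dotProduct_smul, smul_eq_mul]
    have hhbar_ne : (hbar : ℂ) ≠ 0 := ofReal_ne_zero.mpr hhbar.ne'
    push_cast
    field_simp
    ring
  simp_rw [cexp_mul_gaussianWY_add_mul_conj_gaussianWY_sub n hbar W hY x p]
  rw [integral_const_mul, hW.integral_cexp_neg_mul_quadForm_sub (by positivity),
    hY.fromBlocks_mulVec_sumElim_dotProduct, hexp, Fintype.card_fin,
    ← wigner_gaussianWY_normalization hhbar hW.det_pos n, ofReal_mul, ofReal_mul]
  ring
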